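/- A connected linear algebraic group over ℂ cannot act nontrivially (by group morphisms of varieties) on an abelian variety; more precisely, any morphic action of the additive group ℂ (or of ℂ*) on a complex torus by holomorphic automorphisms homotopic to the identity factors through translations, and any such holomorphic action of ℂ on a compact complex torus with a fixed point is trivial. -/

import Mathlib

/-!
Write `F t x = x + g x`. Commuting with lattice translations makes `g` periodic, so `g` is
an entire function with compact range, hence constant by Liouville: every lift `F t` is a
translation by `F t 0`. A fixed point forces `F t 0 ∈ Λ`, so `β t` is then the identity.
-/

theorem ZLattice.eq_add_apply_zero_of_differentiable {V : Type*} [NormedAddCommGroup V]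
    [NormedSpace ℂ V] [FiniteDimensional ℂ V] (L : Submodule ℤ V) [DiscreteTopology L]
    [IsZLattice ℝ L] {f : V → V} (hf : Differentiable ℂ f)
    (hper : ∀ x, ∀ l ∈ L, f (x + l) = f x + l) (x : V) : f x = x + f 0 := by
  have hg : Differentiable ℂ (fun y => f y - y) := hf.sub differentiable_id
  have hg_periodic : ∀ y, ∀ l ∈ L, f (y + l) - (y + l) = f y - y := by
    intro y l hl
    rw [hper y l hl]
    abel
  have hg_bdd : Bornology.IsBounded (Set.range fun y => f y - y) :=
    (IsZLattice.isCompact_range_of_periodic L _ hg.continuous hg_periodic).isBounded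
  have hconst := hg.apply_eq_apply_of_bounded hg_bdd x 0
  rw [sub_zero] at hconst
  rw [← hconst]
  abel

theorem stmt_1_general {V : Type*} [NormedAddCommGroup V] [NormedSpace ℂ V] [FiniteDimensional ℂ V]
    (Λ : AddSubgroup V) (hΛdisc : DiscreteTopology Λ)
    (hΛfull : Submodule.span ℝ (Λ : Set V) = ⊤)
    (β : ℂ → (V ⧸ Λ) → (V ⧸ Λ))
    (F : ℂ → V → V)
    (hF : ∀ t, Differentiable ℂ (F t))
    (hlift : ∀ t x, β t (QuotientAddGroup.mk x) = QuotientAddGroup.mk (F t x))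
    (hper : ∀ t x, ∀ l ∈ Λ, F t (x + l) = F t x + l) :
    (∀ t : ℂ, ∃ a : V, ∀ x : V,
        β t (QuotientAddGroup.mk x) = QuotientAddGroup.mk (x + a)) ∧
    ((∀ t : ℂ, β t 0 = 0) → ∀ t : ℂ, β t = id) := by
  let L := Λ.toIntSubmodule
  have : DiscreteTopology L := hΛdisc
  have : IsZLattice ℝ L := ⟨hΛfull⟩
  have hβ_translation (t : ℂ) (x : V) :
      β t (QuotientAddGroup.mk x) = QuotientAddGroup.mk (x + F t 0) := by
    rw [hlift, ZLattice.eq_add_apply_zero_of_differentiable L (hF t) (hper t)]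
  refine ⟨fun t => ⟨F t 0, hβ_translation t⟩, fun hfix t => ?_⟩
  have hmem : F t 0 ∈ Λ := by
    rw [← QuotientAddGroup.eq_zero_iff, ← zero_add (F t 0), ← hβ_translation]
    exact hfix t
  funext q
  induction q using QuotientAddGroup.induction_on with
  | H x => rw [hβ_translation, QuotientAddGroup.mk_add,
      (QuotientAddGroup.eq_zero_iff _).mpr hmem, add_zero, id]

/-- A connected linear algebraic group (here: the additive group `ℂ`)
cannot act nontrivially on an abelian variety.  Precisely: let `A' = V ⧸ Λ` be a compact
complex torus and let `β` be an action of the additive group `ℂ` on `A'` by holomorphic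
automorphisms homotopic to the identity, i.e. each `β t` lifts to a holomorphic map
`F t : V → V` which commutes with the lattice translations (`F t (x + l) = F t x + l`
for `l ∈ Λ`; this says the induced action on `H₁(A',ℤ) ≅ Λ` is trivial, equivalently
`β t` is homotopic to the identity).  Then:
(1) the action factors through translations: each `β t` is a translation `x ↦ x + a`; and
(2) if moreover the action has `0` as a fixed point, then the action is trivial. -/
theorem stmt_1 {V : Type*} [NormedAddCommGroup V] [NormedSpace ℂ V] [FiniteDimensional ℂ V]
    (Λ : AddSubgroup V) (hΛdisc : DiscreteTopology Λ)
    (hΛfull : Submodule.span ℝ (Λ : Set V) = ⊤)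
    (β : ℂ → (V ⧸ Λ) → (V ⧸ Λ))
    (hβ0 : β 0 = id)
    (hβadd : ∀ s t : ℂ, β (s + t) = β s ∘ β t)
    (F : ℂ → V → V)
    (hF : ∀ t, Differentiable ℂ (F t))
    (hlift : ∀ t x, β t (QuotientAddGroup.mk x) = QuotientAddGroup.mk (F t x))
    (hper : ∀ t x, ∀ l ∈ Λ, F t (x + l) = F t x + l) :
    (∀ t : ℂ, ∃ a : V, ∀ x : V,
        β t (QuotientAddGroup.mk x) = QuotientAddGroup.mk (x + a)) ∧
    ((∀ t : ℂ, β t 0 = 0) → ∀ t : ℂ, β t = id) :=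
  stmt_1_general Λ hΛdisc hΛfull β F hF hlift hper
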